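/- If G is an n-vertex tight (k,ℓ)-stable graph (with n > k > ℓ ≥ 0), then the disjoint union G ⊔ K₁ of G with an isolated vertex is an (n+1)-vertex tight (k+1, ℓ+1)-stable graph. -/

import Mathlib

open SimpleGraph Set

/-- The independence number of `G` restricted to a vertex subset `A`:
the largest cardinality of a finite set of vertices inside `A` that is
pairwise non-adjacent in `G`. -/
noncomputable def indepNumOn {V : Type*} (G : SimpleGraph V) (A : Set V) : ℕ :=
  sSup {n | ∃ s : Finset V, ↑s ⊆ A ∧ s.card = n ∧
    ∀ x ∈ s, ∀ y ∈ s, x ≠ y → ¬ G.Adj x y}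

/-- The independence number of `G`. -/
noncomputable def indepNum {V : Type*} (G : SimpleGraph V) : ℕ :=
  indepNumOn G Set.univ

/-- `G` is `(k, l)`-stable: removing any `k` vertices decreases the
independence number by at most `l`. -/
def IsStable {V : Type*} (G : SimpleGraph V) (k l : ℕ) : Prop :=
  ∀ S : Finset V, S.card = k → _root_.indepNum G ≤ indepNumOn G (↑S : Set V)ᶜ + l

/-- The disjoint union of `G` with one isolated vertex. -/
def addIsolated {V : Type*} (G : SimpleGraph V) : SimpleGraph (Option V) :=
  SimpleGraph.fromRel (fun a b => ∃ x y, a = some x ∧ b = some y ∧ G.Adj x y)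

/-!
The isolated vertex `∗` can be added to every independent set, so for every vertex set `A` of
`G ⊔ K₁` one has `α(A) = α_G(A ∩ V) + [∗ ∈ A]`; in particular `α(G ⊔ K₁) = α(G) + 1`, which
transfers tightness. A `(k+1)`-set `S` of `G ⊔ K₁` either contains `∗`, and then `(k, ℓ)`-stability
of `G` applies to the `k` vertices `S ∩ V`, or it does not, and then `∗` survives and `G` is
`(k+1, ℓ+1)`-stable because deleting one more vertex costs at most one in `α`.
-/

section IndepNumOn

variable {V : Type*} [Finite V] {G : SimpleGraph V}

lemma bddAbove_indepNumOn (G : SimpleGraph V) (A : Set V) :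
    BddAbove {n | ∃ s : Finset V, ↑s ⊆ A ∧ s.card = n ∧
      ∀ x ∈ s, ∀ y ∈ s, x ≠ y → ¬ G.Adj x y} := by
  have := Fintype.ofFinite V
  exact ⟨Fintype.card V, by rintro n ⟨s, -, rfl, -⟩; exact s.card_le_univ⟩

lemma SimpleGraph.IsIndepSet.card_le_indepNumOn {A : Set V} {s : Finset V} (hs : G.IsIndepSet ↑s)
    (hsA : ↑s ⊆ A) : s.card ≤ indepNumOn G A :=
  le_csSup (bddAbove_indepNumOn G A) ⟨s, hsA, rfl, hs⟩

lemma exists_isIndepSet_card_eq_indepNumOn (G : SimpleGraph V) (A : Set V) :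
    ∃ s : Finset V, ↑s ⊆ A ∧ G.IsIndepSet ↑s ∧ s.card = indepNumOn G A := by
  obtain ⟨s, hsA, hcard, hs⟩ :=
    Nat.sSup_mem (by exact ⟨0, ∅, by simp⟩) (bddAbove_indepNumOn G A)
  exact ⟨s, hsA, hs, hcard⟩

lemma indepNumOn_le_diff_singleton_add_one (G : SimpleGraph V) (A : Set V) (v : V) :
    indepNumOn G A ≤ indepNumOn G (A \ {v}) + 1 := by
  classical
  obtain ⟨s, hsA, hs, hcard⟩ := exists_isIndepSet_card_eq_indepNumOn G A
  have herase : (s.erase v).card ≤ indepNumOn G (A \ {v}) :=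
    IsIndepSet.card_le_indepNumOn (Set.Pairwise.mono (s.coe_erase v ▸ Set.sdiff_subset) hs)
      (s.coe_erase v ▸ Set.sdiff_subset_sdiff_left hsA)
  have := s.pred_card_le_card_erase (a := v)
  omega

lemma IsStable.succ {k l : ℕ} (h : IsStable G k l) : IsStable G (k + 1) (l + 1) := by
  classical
  intro S hS
  obtain ⟨v, hv⟩ : S.Nonempty := Finset.card_pos.1 (by omega)
  have hcompl : (↑(S.erase v) : Set V)ᶜ \ {v} = (↑S)ᶜ := by
    ext x
    by_cases hx : x = v <;> simp [hx, hv]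
  have hstable := h (S.erase v) (by rw [Finset.card_erase_of_mem hv, hS, Nat.add_sub_cancel])
  have hdelete := indepNumOn_le_diff_singleton_add_one G (↑(S.erase v))ᶜ v
  rw [hcompl] at hdelete
  omega

end IndepNumOn

section AddIsolated

variable {V : Type*} (G : SimpleGraph V)

@[simp]
lemma addIsolated_adj_some {x y : V} : (addIsolated G).Adj (some x) (some y) ↔ G.Adj x y := by
  simp only [addIsolated, fromRel_adj, ne_eq, Option.some.injEq]
  constructor
  · rintro ⟨-, ⟨a, b, rfl, rfl, h⟩ | ⟨a, b, rfl, rfl, h⟩⟩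
    exacts [h, h.symm]
  · exact fun h => ⟨h.ne, Or.inl ⟨x, y, rfl, rfl, h⟩⟩

@[simp]
lemma not_addIsolated_adj_none (b : Option V) : ¬ (addIsolated G).Adj none b := by
  simp [addIsolated]

lemma isIndepSet_addIsolated_iff {s : Set (Option V)} :
    (addIsolated G).IsIndepSet s ↔ G.IsIndepSet (some ⁻¹' s) := by
  constructor
  · exact fun h x hx y hy hxy hadj => h hx hy (by simpa using hxy) ((addIsolated_adj_some G).2 hadj)
  · rintro h (_ | x) hx (_ | y) hy hxy hadj
    · exact not_addIsolated_adj_none G _ hadj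
    · exact not_addIsolated_adj_none G _ hadj
    · exact not_addIsolated_adj_none G _ hadj.symm
    · exact h hx hy (by simpa using hxy) ((addIsolated_adj_some G).1 hadj)

variable [Finite V]

open Classical in
lemma indepNumOn_addIsolated (A : Set (Option V)) :
    indepNumOn (addIsolated G) A = indepNumOn G (some ⁻¹' A) + if none ∈ A then 1 else 0 := by
  apply le_antisymm
  · obtain ⟨t, htA, ht, hcard⟩ := exists_isIndepSet_card_eq_indepNumOn (addIsolated G) A
    have hle : t.eraseNone.card ≤ indepNumOn G (some ⁻¹' A) := by
      refine IsIndepSet.card_le_indepNumOn ?_ ?_ <;> rw [Finset.coe_eraseNone]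
      exacts [(isIndepSet_addIsolated_iff G).1 ht, Set.preimage_mono htA]
    by_cases hnt : none ∈ t
    · rw [Finset.card_eraseNone_of_mem hnt] at hle
      rw [if_pos (htA hnt)]
      omega
    · rw [Finset.card_eraseNone_of_not_mem hnt] at hle
      split_ifs <;> omega
  · obtain ⟨s, hsA, hs, hcard⟩ := exists_isIndepSet_card_eq_indepNumOn G (some ⁻¹' A)
    split_ifs with hA
    · have hind : (addIsolated G).IsIndepSet ↑s.insertNone := by
        rwa [isIndepSet_addIsolated_iff, ← Finset.coe_eraseNone, Finset.eraseNone_insertNone]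
      have hsub : ↑s.insertNone ⊆ A := by
        rintro (_ | x) hx
        exacts [hA, hsA (Finset.some_mem_insertNone.1 hx)]
      have := hind.card_le_indepNumOn hsub
      rwa [Finset.card_insertNone, hcard] at this
    · have hind : (addIsolated G).IsIndepSet ↑(s.map Function.Embedding.some) := by
        rwa [isIndepSet_addIsolated_iff, ← Finset.coe_eraseNone, Finset.eraseNone_map_some]
      have hsub : ↑(s.map Function.Embedding.some) ⊆ A := by
        simpa [Set.image_subset_iff] using hsA
      have := hind.card_le_indepNumOn hsub
      rwa [Finset.card_map, hcard] at this

lemma indepNum_addIsolated : _root_.indepNum (addIsolated G) = _root_.indepNum G + 1 := by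
  simpa [_root_.indepNum] using indepNumOn_addIsolated G Set.univ

variable {G}

lemma IsStable.addIsolated {k l : ℕ} (h : IsStable G k l) :
    IsStable (_root_.addIsolated G) (k + 1) (l + 1) := by
  intro S hS
  have hcompl := indepNumOn_addIsolated G (↑S)ᶜ
  rw [Set.preimage_compl, ← Finset.coe_eraseNone] at hcompl
  rw [indepNum_addIsolated, hcompl]
  by_cases hnS : none ∈ S
  · have := h S.eraseNone (by rw [Finset.card_eraseNone_of_mem hnS]; omega)
    simp only [Set.mem_compl_iff, Finset.mem_coe, hnS, not_true_eq_false, if_false]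
    omega
  · have := h.succ S.eraseNone (by rw [Finset.card_eraseNone_of_not_mem hnS, hS])
    simp only [Set.mem_compl_iff, Finset.mem_coe, hnS, not_false_eq_true, if_true]
    omega

end AddIsolated

theorem tight_stable_addIsolated_general {V : Type*} [Fintype V] (G : SimpleGraph V) (n k l : ℕ)
    (hstable : IsStable G k l) (htight : _root_.indepNum G = (n - k + 1) / 2 + l) :
    IsStable (addIsolated G) (k + 1) (l + 1) ∧
      _root_.indepNum (addIsolated G) = ((n + 1) - (k + 1) + 1) / 2 + (l + 1) := by
  refine ⟨hstable.addIsolated, ?_⟩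
  rw [indepNum_addIsolated, htight]
  omega

theorem tight_stable_addIsolated {V : Type*} [Fintype V] (G : SimpleGraph V) (n k l : ℕ)
    (hn : Fintype.card V = n) (hkn : k < n) (hlk : l < k)
    (hstable : IsStable G k l) (htight : _root_.indepNum G = (n - k + 1) / 2 + l) :
    IsStable (addIsolated G) (k + 1) (l + 1) ∧
      _root_.indepNum (addIsolated G) = ((n + 1) - (k + 1) + 1) / 2 + (l + 1) :=
  tight_stable_addIsolated_general G n k l hstable htight
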